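/- If a chip configuration σ on K_n has activity a(σ) < 1, then U^t σ is confined for all t greater than or equal to the transient length t₀. -/

import Mathlib

open Finset

/-- Number of unstable vertices of a chip configuration on `K n`. -/
def chipR (n : ℕ) (σ : Fin n → ℕ) : ℕ :=
  (Finset.univ.filter (fun v => n ≤ σ v)).card

/-- Parallel chip-firing update on the complete graph `K n`. -/
def chipU (n : ℕ) (σ : Fin n → ℕ) : Fin n → ℕ :=
  fun v => if n ≤ σ v then σ v + chipR n σ - n else σ v + chipR n σ

/-- Total number of firings in the first `t` updates. -/
def chipAlpha (n : ℕ) (σ : Fin n → ℕ) (t : ℕ) : ℕ :=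
  ∑ s ∈ Finset.range t, chipR n ((chipU n)^[s] σ)

/-- Number of times vertex `v` fires in the first `t` updates. -/
def odometer (n : ℕ) (σ : Fin n → ℕ) (t : ℕ) (v : Fin n) : ℕ :=
  ((Finset.range t).filter (fun s => n ≤ (chipU n)^[s] σ v)).card

/-- `a` is the activity of `σ`. -/
def Activity (n : ℕ) (σ : Fin n → ℕ) (a : ℝ) : Prop :=
  Filter.Tendsto (fun t : ℕ => (chipAlpha n σ t : ℝ) / (n * t)) Filter.atTop (nhds a)

/-- A chip configuration is confined if all heights are at most `2n-1`
and the heights differ pairwise by at most `n-1`. -/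
def Confined (n : ℕ) (σ : Fin n → ℕ) : Prop :=
  (∀ v, σ v ≤ 2 * n - 1) ∧ ∀ v w, σ v ≤ σ w + (n - 1)

/-- The eventual period: least `m ≥ 1` with `U^{t+m} σ = U^t σ` for all large `t`. -/
noncomputable def eventualPeriod (n : ℕ) (σ : Fin n → ℕ) : ℕ :=
  sInf {m | 1 ≤ m ∧ ∃ t₀, ∀ t ≥ t₀, (chipU n)^[t + m] σ = (chipU n)^[t] σ}

/-- The transient length of the dynamics started at `σ`. -/
noncomputable def transientLength (n : ℕ) (σ : Fin n → ℕ) : ℕ :=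
  sInf {t | ∃ t' > t, (chipU n)^[t'] σ = (chipU n)^[t] σ}

/-! The total number of chips is conserved, so the orbit of `σ` is eventually periodic and
`U^t σ` for `t ≥ t₀` recurs at arbitrarily late times. The odometer identity
`σ_t(v) + n·(firings of v before t) = σ(v) + (total firings before t)` shows that a vertex firing
at every step from some time on forces activity `1`; so when `a(σ) < 1` every vertex is stable at
some time after any given one. A vertex that was stable at time `s` has, at every time after `s`,
height at most `2n - 1` and at most `n - 1` above every other vertex: all vertices receive the
same `r` chips, and only those of height at least `n` lose `n`. -/

theorem chipR_le (n : ℕ) (σ : Fin n → ℕ) : chipR n σ ≤ n :=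
  (card_filter_le _ _).trans_eq (card_fin n)

theorem chipU_add_ite (n : ℕ) (σ : Fin n → ℕ) (v : Fin n) :
    chipU n σ v + (if n ≤ σ v then n else 0) = σ v + chipR n σ := by
  unfold chipU; split <;> omega

theorem chipR_le_chipU (n : ℕ) (σ : Fin n → ℕ) (v : Fin n) : chipR n σ ≤ chipU n σ v := by
  unfold chipU; split <;> omega

theorem sum_chipU (n : ℕ) (σ : Fin n → ℕ) : ∑ v, chipU n σ v = ∑ v, σ v := by
  have h := sum_congr rfl fun v (_ : v ∈ univ) => chipU_add_ite n σ v
  have hfire : ∑ v, (if n ≤ σ v then n else 0) = n * chipR n σ := by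
    rw [← sum_filter, sum_const, smul_eq_mul, mul_comm, chipR]
  simp only [sum_add_distrib, hfire, sum_const, card_univ, Fintype.card_fin, smul_eq_mul] at h
  omega

theorem sum_iterate_chipU (n : ℕ) (σ : Fin n → ℕ) (t : ℕ) :
    ∑ v, (chipU n)^[t] σ v = ∑ v, σ v := by
  induction t with
  | zero => rfl
  | succ t ih => rw [Function.iterate_succ_apply', sum_chipU, ih]

theorem exists_lt_iterate_chipU_eq (n : ℕ) (σ : Fin n → ℕ) :
    ∃ t, ∃ t' > t, (chipU n)^[t'] σ = (chipU n)^[t] σ := by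
  have hmem (t : ℕ) : (chipU n)^[t] σ ∈ Set.Iic (fun _ => ∑ w, σ w) := fun v => by
    rw [← sum_iterate_chipU n σ t]
    exact single_le_sum (fun w _ => Nat.zero_le _) (mem_univ v)
  obtain ⟨t, t', htt', heq⟩ := (Set.finite_Iic _).exists_lt_map_eq_of_forall_mem hmem
  exact ⟨t, t', htt', heq.symm⟩

theorem isPeriodicPt_iterate_transientLength (n : ℕ) (σ : Fin n → ℕ) :
    ∃ p, 0 < p ∧
      Function.IsPeriodicPt (chipU n) p ((chipU n)^[transientLength n σ] σ) := by
  obtain ⟨t', ht', heq⟩ : ∃ t' > transientLength n σ,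
      (chipU n)^[t'] σ = (chipU n)^[transientLength n σ] σ :=
    Nat.sInf_mem (s := {t | ∃ t' > t, (chipU n)^[t'] σ = (chipU n)^[t] σ})
      (exists_lt_iterate_chipU_eq n σ)
  refine ⟨t' - transientLength n σ, by omega, ?_⟩
  rw [Function.IsPeriodicPt, Function.IsFixedPt, ← Function.iterate_add_apply,
    Nat.sub_add_cancel ht'.le, heq]

theorem iterate_chipU_add_mul_odometer (n : ℕ) (σ : Fin n → ℕ) (t : ℕ) (v : Fin n) :
    (chipU n)^[t] σ v + n * odometer n σ t v = σ v + chipAlpha n σ t := by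
  induction t with
  | zero => simp [odometer, chipAlpha]
  | succ t ih =>
    have hα : chipAlpha n σ (t + 1) = chipAlpha n σ t + chipR n ((chipU n)^[t] σ) :=
      sum_range_succ _ _
    have hodo : odometer n σ (t + 1) v
        = odometer n σ t v + (if n ≤ (chipU n)^[t] σ v then 1 else 0) := by
      rw [odometer, range_add_one, filter_insert]
      split
      · rw [card_insert_of_notMem (by simp)]; rfl
      · rfl
    have hstep := chipU_add_ite n ((chipU n)^[t] σ) v
    rw [Function.iterate_succ_apply', hα, hodo]
    split_ifs at hstep ⊢ <;> linarith

theorem chipAlpha_le (n : ℕ) (σ : Fin n → ℕ) (t : ℕ) : chipAlpha n σ t ≤ n * t :=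
  (sum_le_sum fun s _ => chipR_le n _).trans_eq (by simp [mul_comm])

theorem mul_le_chipAlpha_of_forall_le_iterate {n : ℕ} {σ : Fin n → ℕ} {v : Fin n} {t₀ : ℕ}
    (hfire : ∀ s ≥ t₀, n ≤ (chipU n)^[s] σ v) (t : ℕ) :
    n * t ≤ chipAlpha n σ t + σ v + n * t₀ := by
  have hodo : t - t₀ ≤ odometer n σ t v := by
    calc t - t₀ = (Ico t₀ t).card := (Nat.card_Ico t₀ t).symm
    _ ≤ odometer n σ t v := card_le_card fun s hs => by
      rw [mem_Ico] at hs
      exact mem_filter.2 ⟨mem_range.2 hs.2, hfire s hs.1⟩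
  have hbound : n * t ≤ n * odometer n σ t v + n * t₀ := by
    rw [← Nat.mul_add]; exact Nat.mul_le_mul_left n (by omega)
  have := iterate_chipU_add_mul_odometer n σ t v
  omega

theorem tendsto_div_mul_of_le_of_le_add {u : ℕ → ℝ} {c d : ℝ} (hc : 0 < c)
    (hle : ∀ t, u t ≤ c * t) (hge : ∀ t, c * t ≤ u t + d) :
    Filter.Tendsto (fun t : ℕ => u t / (c * t)) Filter.atTop (nhds 1) := by
  have hlower : Filter.Tendsto (fun t : ℕ => 1 - d / c / t) Filter.atTop (nhds 1) := by
    simpa using tendsto_const_nhds.sub (tendsto_const_div_atTop_nhds_zero_nat (d / c))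
  have hpos : ∀ᶠ t : ℕ in Filter.atTop, (0 : ℝ) < t :=
    (Filter.eventually_gt_atTop 0).mono fun t ht => Nat.cast_pos.2 ht
  refine tendsto_of_tendsto_of_tendsto_of_le_of_le' hlower tendsto_const_nhds ?_ ?_
  · filter_upwards [hpos] with t ht
    rw [le_div_iff₀ (mul_pos hc ht)]
    have : (1 - d / c / t) * (c * t) = c * t - d := by field_simp
    linarith [hge t]
  · filter_upwards [hpos] with t ht
    exact (div_le_one (mul_pos hc ht)).2 (hle t)

theorem Activity.eq_one_of_forall_le_iterate {n : ℕ} {σ : Fin n → ℕ} {a : ℝ}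
    (ha : Activity n σ a) {v : Fin n} {t₀ : ℕ} (hfire : ∀ s ≥ t₀, n ≤ (chipU n)^[s] σ v) :
    a = 1 := by
  refine tendsto_nhds_unique ha (tendsto_div_mul_of_le_of_le_add (d := σ v + n * t₀)
    (Nat.cast_pos.2 v.pos) (fun t => ?_) (fun t => ?_))
  · exact_mod_cast chipAlpha_le n σ t
  · have := mul_le_chipAlpha_of_forall_le_iterate hfire t
    rw [← add_assoc]
    exact_mod_cast this

theorem Activity.exists_ge_iterate_lt {n : ℕ} {σ : Fin n → ℕ} {a : ℝ}
    (ha : Activity n σ a) (ha1 : a < 1) (v : Fin n) (t₀ : ℕ) :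
    ∃ s ≥ t₀, (chipU n)^[s] σ v < n := by
  by_contra! hfire
  exact ha1.ne (ha.eq_one_of_forall_le_iterate hfire)

def Settled (n : ℕ) (σ : Fin n → ℕ) (v : Fin n) : Prop :=
  σ v ≤ 2 * n - 1 ∧ ∀ w, σ v ≤ σ w + (n - 1)

theorem confined_of_forall_settled {n : ℕ} {σ : Fin n → ℕ} (h : ∀ v, Settled n σ v) :
    Confined n σ :=
  ⟨fun v => (h v).1, fun v w => (h v).2 w⟩

theorem settled_chipU_of_lt {n : ℕ} {σ : Fin n → ℕ} {v : Fin n} (hv : σ v < n) :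
    Settled n (chipU n σ) v := by
  have := chipR_le n σ
  have hU : chipU n σ v = σ v + chipR n σ := if_neg hv.not_ge
  exact ⟨by omega, fun w => by have := chipR_le_chipU n σ w; omega⟩

theorem Settled.step {n : ℕ} {σ : Fin n → ℕ} {v : Fin n} (h : Settled n σ v) :
    Settled n (chipU n σ) v := by
  obtain ⟨hle, hgap⟩ := h
  have := chipR_le n σ
  refine ⟨by unfold chipU; split <;> omega, fun w => ?_⟩
  have := hgap w
  unfold chipU
  split_ifs <;> omega

theorem Settled.iterate {n : ℕ} {σ : Fin n → ℕ} {v : Fin n} (h : Settled n σ v) (k : ℕ) :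
    Settled n ((chipU n)^[k] σ) v := by
  induction k with
  | zero => exact h
  | succ k ih => rw [Function.iterate_succ_apply']; exact ih.step

theorem eventually_confined_general (n : ℕ) (σ : Fin n → ℕ)
    (a : ℝ) (ha : Activity n σ a) (ha1 : a < 1) :
    ∀ t ≥ transientLength n σ, Confined n ((chipU n)^[t] σ) := by
  intro t ht
  obtain ⟨p, hp, hper⟩ := isPeriodicPt_iterate_transientLength n σ
  have hrecur (j : ℕ) : (chipU n)^[j * p + t] σ = (chipU n)^[t] σ := by
    have hy : Function.IsPeriodicPt (chipU n) p ((chipU n)^[t] σ) := by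
      simpa only [← Function.iterate_add_apply, Nat.sub_add_cancel ht]
        using hper.apply_iterate (t - transientLength n σ)
    rw [Function.iterate_add_apply]
    exact (hy.const_mul j).eq
  refine confined_of_forall_settled fun v => ?_
  obtain ⟨s, -, hs⟩ := ha.exists_ge_iterate_lt ha1 v t
  have hlate : s + 1 ≤ (s + 1) * p + t := le_add_right (Nat.le_mul_of_pos_right _ hp)
  rw [← hrecur (s + 1), ← Nat.sub_add_cancel hlate, Function.iterate_add_apply,
    Function.iterate_succ_apply']
  exact (settled_chipU_of_lt hs).iterate _

theorem eventually_confined (n : ℕ) (hn : 0 < n) (σ : Fin n → ℕ)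
    (a : ℝ) (ha : Activity n σ a) (ha1 : a < 1) :
    ∀ t ≥ transientLength n σ, Confined n ((chipU n)^[t] σ) :=
  eventually_confined_general n σ a ha ha1
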